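/- arXiv:1606.06168 — 2 statements merged into one kernel-verified Lean document; each statement's English description precedes it below -/
import Mathlib

section
/- Let ε ∈ {1, −1}, let M be a ℤ-module and λ: M × M → ℤ an ε-symmetric ℤ-bilinear form whose radical {x ∈ M : λ(x, v) = 0 for all v ∈ M} consists of torsion elements. Let β: M' → M be an injective ℤ-linear map such that the quotient M / range(β) is isomorphic as an additive group to ℤ, and let λ' be the pulled-back form on M' defined by λ'(x, y) := λ(β(x), β(y)); let μ be any function from M to a type with a zero element and set μ' := μ ∘ β. Suppose L' ≤ M' is a Lagrangian for (λ', μ'), and that there exists y' ∈ L' such that λ'(y', w) = 0 for every w ∈ M' and β(y') is not a torsion element of M. Then the image β(L') is a Lagrangian for (λ, μ) in M. -/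
/-!
Since `β y'` is orthogonal to `range β` but, not being torsion, not to all of `M`, the functional
`λ(β y', -)` is nonzero and factors through `M ⧸ range β ≅ ℤ`; a nonzero map `ℤ → ℤ` is injective,
so its kernel is exactly `range β`. By ε-symmetry every `x` orthogonal to `β L'` is orthogonal to
`β y'`, hence `x = β u`, and then `u ∈ L'^⊥ = L'`.
-/

/-- `L` is a Lagrangian for the form `lam` with refinement `mu` if the orthogonal
complement `{x | ∀ v ∈ L, lam x v = 0}` equals `L` and `mu` vanishes on `L`. -/
def IsLagrangian {M A : Type*} [AddCommGroup M] [Module ℤ M] [Zero A]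
    (lam : M → M → ℤ) (mu : M → A) (L : Submodule ℤ M) : Prop :=
  {x : M | ∀ v ∈ L, lam x v = 0} = (L : Set M) ∧ ∀ l ∈ L, mu l = 0

theorem Submodule.mem_of_apply_eq_zero_of_quotient_equiv_int {M : Type*} [AddCommGroup M]
    [Module ℤ M] {N : Submodule ℤ M} (e : (M ⧸ N) ≃+ ℤ) {f : M →ₗ[ℤ] ℤ}
    (hN : N ≤ LinearMap.ker f) (hf : f ≠ 0) {x : M} (hx : f x = 0) : x ∈ N := by
  set c := N.liftQ f hN (e.symm 1)
  have hlift : ∀ q, N.liftQ f hN q = e q * c := fun q => by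
    conv_lhs => rw [← e.symm_apply_apply q, ← mul_one (e q), ← smul_eq_mul, map_zsmul, map_zsmul]
    rfl
  have hc : c ≠ 0 := by
    rintro hc
    exact hf (LinearMap.ext fun v => by simpa [hc] using hlift (N.mkQ v))
  have hex : e (N.mkQ x) = 0 := by
    have := hlift (N.mkQ x)
    rw [Submodule.mkQ_apply, Submodule.liftQ_apply, hx, eq_comm, mul_eq_zero] at this
    exact this.resolve_right hc
  rw [← map_zero e, e.injective.eq_iff, Submodule.mkQ_apply, Submodule.Quotient.mk_eq_zero] at hex
  exact hex

theorem IsLagrangian.map_of_quotient_equiv_int {M M' A : Type*} [AddCommGroup M] [Module ℤ M]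
    [AddCommGroup M'] [Module ℤ M'] [Zero A] {ε : ℤ} (hε : ε ≠ 0)
    {lam : M →ₗ[ℤ] M →ₗ[ℤ] ℤ} (hsymm : ∀ x y : M, lam x y = ε * lam y x)
    {β : M' →ₗ[ℤ] M} (e : (M ⧸ LinearMap.range β) ≃+ ℤ) {mu : M → A} {L' : Submodule ℤ M'}
    (hL' : IsLagrangian (fun x y => lam (β x) (β y)) (fun x => mu (β x)) L')
    {y' : M'} (hy'L : y' ∈ L') (hy'perp : ∀ w : M', lam (β y') (β w) = 0)
    (hy'ne : lam (β y') ≠ 0) :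
    IsLagrangian (fun x y => lam x y) mu (L'.map β) := by
  obtain ⟨hperp, hmu⟩ := hL'
  have hperp' (u : M') : (∀ v ∈ L', lam (β u) (β v) = 0) ↔ u ∈ L' := Set.ext_iff.mp hperp u
  refine ⟨Set.ext fun x => ⟨fun hx => ?_, ?_⟩, ?_⟩
  · have hxy : lam (β y') x = 0 := by
      have : lam x (β y') = 0 := hx _ (Submodule.mem_map_of_mem hy'L)
      rw [hsymm] at this
      exact (mul_eq_zero.mp this).resolve_left hε
    obtain ⟨u, rfl⟩ : x ∈ LinearMap.range β :=
      Submodule.mem_of_apply_eq_zero_of_quotient_equiv_int e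
        (by rintro _ ⟨w, rfl⟩; exact hy'perp w) hy'ne hxy
    exact Submodule.mem_map_of_mem ((hperp' u).mp fun v hv => hx _ (Submodule.mem_map_of_mem hv))
  · rintro ⟨l, hl, rfl⟩ _ ⟨v, hv, rfl⟩
    exact (hperp' l).mpr hl v hv
  · rintro _ ⟨l, hl, rfl⟩
    exact hmu l hl

theorem lagrangian_image_of_finite_order_surgery_general
    {M M' A : Type*} [AddCommGroup M] [Module ℤ M]
    [AddCommGroup M'] [Module ℤ M'] [Zero A]
    (ε : ℤ) (hε : ε = 1 ∨ ε = -1)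
    (lam : M →ₗ[ℤ] M →ₗ[ℤ] ℤ)
    (hsymm : ∀ x y : M, lam x y = ε * lam y x)
    (hrad : ∀ x : M, (∀ v : M, lam x v = 0) → IsOfFinAddOrder x)
    (β : M' →ₗ[ℤ] M)
    (hquot : Nonempty ((M ⧸ LinearMap.range β) ≃+ ℤ))
    (mu : M → A)
    (L' : Submodule ℤ M')
    (hL' : IsLagrangian (fun x y => lam (β x) (β y)) (fun x => mu (β x)) L')
    (y' : M') (hy'L : y' ∈ L')
    (hy'perp : ∀ w : M', lam (β y') (β w) = 0)
    (hy'tor : ¬ IsOfFinAddOrder (β y')) :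
    IsLagrangian (fun x y => lam x y) mu (Submodule.map β L') := by
  have hε0 : ε ≠ 0 := by rcases hε with rfl | rfl <;> decide
  have hy'ne : lam (β y') ≠ 0 := fun h => hy'tor (hrad _ fun v => by rw [h, LinearMap.zero_apply])
  exact hL'.map_of_quotient_equiv_int hε0 hsymm hquot.some hy'L hy'perp hy'ne

theorem lagrangian_image_of_finite_order_surgery
    {M M' A : Type*} [AddCommGroup M] [Module ℤ M]
    [AddCommGroup M'] [Module ℤ M'] [Zero A]
    (ε : ℤ) (hε : ε = 1 ∨ ε = -1)
    (lam : M →ₗ[ℤ] M →ₗ[ℤ] ℤ)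
    (hsymm : ∀ x y : M, lam x y = ε * lam y x)
    (hrad : ∀ x : M, (∀ v : M, lam x v = 0) → IsOfFinAddOrder x)
    (β : M' →ₗ[ℤ] M) (hβ : Function.Injective β)
    (hquot : Nonempty ((M ⧸ LinearMap.range β) ≃+ ℤ))
    (mu : M → A)
    (L' : Submodule ℤ M')
    (hL' : IsLagrangian (fun x y => lam (β x) (β y)) (fun x => mu (β x)) L')
    (y' : M') (hy'L : y' ∈ L')
    (hy'perp : ∀ w : M', lam (β y') (β w) = 0)
    (hy'tor : ¬ IsOfFinAddOrder (β y')) :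
    IsLagrangian (fun x y => lam x y) mu (Submodule.map β L') :=
  lagrangian_image_of_finite_order_surgery_general ε hε lam hsymm hrad β hquot mu L' hL' y' hy'L
    hy'perp hy'tor
end

section
/- Let ε ∈ {1, −1}, let β: M' → M be an injective ℤ-linear map of ℤ-modules, let λ: M × M → ℤ be an ε-symmetric ℤ-bilinear form, let μ be a function from M to a type with a zero element, and define λ'(x, y) := λ(β(x), β(y)) and μ' := μ ∘ β. Let L' ≤ M' be a submodule with (L')^⊥ = L' (with respect to λ') and μ'(l') = 0 for all l' ∈ L'. Suppose there exists y ∈ β(L') such that for every v ∈ M, λ(y, v) = 0 holds if and only if v lies in the range of β. Then the image β(L') satisfies (β(L'))^⊥ = β(L') with respect to λ, and μ vanishes on β(L'); that is, β(L') is a Lagrangian for (λ, μ). -/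
/-!
Everything orthogonal to `β(L')` is in particular orthogonal to `y`, hence by ε-symmetry
`y` is orthogonal to it, so the detecting property puts it in the range of `β`. On the range
of `β` the form is the pulled-back one, for which `L'` is its own orthogonal complement.
-/

section

variable {M M' A : Type*} [AddCommGroup M] [Module ℤ M] [AddCommGroup M'] [Module ℤ M']

theorem orthogonal_subset_of_detecting {lam : M → M → ℤ} {ε : ℤ}
    (hsymm : ∀ x y, lam x y = ε * lam y x) {L : Submodule ℤ M} {y : M} (hy : y ∈ L)
    {N : Set M} (hdet : ∀ v, lam y v = 0 → v ∈ N) :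
    {x : M | ∀ v ∈ L, lam x v = 0} ⊆ N := fun x hx =>
  hdet x (by rw [hsymm, hx y hy, mul_zero])

theorem IsLagrangian.map_of_orthogonal_subset_range [Zero A] {lam : M → M → ℤ} {mu : M → A}
    (β : M' →ₗ[ℤ] M) {L' : Submodule ℤ M'}
    (hL' : IsLagrangian (fun x y => lam (β x) (β y)) (fun x => mu (β x)) L')
    (hrange : {x : M | ∀ v ∈ L'.map β, lam x v = 0} ⊆ LinearMap.range β) :
    IsLagrangian lam mu (L'.map β) := by
  obtain ⟨horth, hmu⟩ := hL'
  have hpullback (x' : M') : (∀ v ∈ L'.map β, lam (β x') v = 0) ↔ x' ∈ L' := by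
    rw [← SetLike.mem_coe, ← horth]
    simp only [Submodule.mem_map, forall_exists_index, and_imp, forall_apply_eq_imp_iff₂,
      Set.mem_ofPred_eq]
  refine ⟨Set.Subset.antisymm (fun x hx => ?_) ?_, ?_⟩
  · obtain ⟨x', rfl⟩ := hrange hx
    exact Submodule.mem_map_of_mem ((hpullback x').1 hx)
  · rintro _ ⟨l', hl', rfl⟩
    exact (hpullback l').2 hl'
  · rintro _ ⟨l', hl', rfl⟩
    exact hmu l' hl'

end

theorem lagrangian_image_of_detecting_element_general
    {M M' A : Type*} [AddCommGroup M] [Module ℤ M]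
    [AddCommGroup M'] [Module ℤ M'] [Zero A]
    (ε : ℤ)
    (β : M' →ₗ[ℤ] M)
    (lam : M →ₗ[ℤ] M →ₗ[ℤ] ℤ)
    (hsymm : ∀ x y : M, lam x y = ε * lam y x)
    (mu : M → A)
    (L' : Submodule ℤ M')
    (hL' : IsLagrangian (fun x y => lam (β x) (β y)) (fun x => mu (β x)) L')
    (y : M) (hy : y ∈ Submodule.map β L')
    (hdet : ∀ v : M, lam y v = 0 ↔ v ∈ LinearMap.range β) :
    IsLagrangian (fun x y => lam x y) mu (Submodule.map β L') :=
  hL'.map_of_orthogonal_subset_range β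
    (orthogonal_subset_of_detecting hsymm hy fun v => (hdet v).1)

theorem lagrangian_image_of_detecting_element
    {M M' A : Type*} [AddCommGroup M] [Module ℤ M]
    [AddCommGroup M'] [Module ℤ M'] [Zero A]
    (ε : ℤ) (hε : ε = 1 ∨ ε = -1)
    (β : M' →ₗ[ℤ] M) (hβ : Function.Injective β)
    (lam : M →ₗ[ℤ] M →ₗ[ℤ] ℤ)
    (hsymm : ∀ x y : M, lam x y = ε * lam y x)
    (mu : M → A)
    (L' : Submodule ℤ M')
    (hL' : IsLagrangian (fun x y => lam (β x) (β y)) (fun x => mu (β x)) L')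
    (y : M) (hy : y ∈ Submodule.map β L')
    (hdet : ∀ v : M, lam y v = 0 ↔ v ∈ LinearMap.range β) :
    IsLagrangian (fun x y => lam x y) mu (Submodule.map β L') :=
  lagrangian_image_of_detecting_element_general ε β lam hsymm mu L' hL' y hy hdet
end
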